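/- As ρ tends to -1 from above, Φ₂(x,y;ρ) converges to max(Φ(x) + Φ(y) - 1, 0) for every x, y ∈ ℝ. -/

import Mathlib

open MeasureTheory Real Set Filter

noncomputable def stdPdf (x : ℝ) : ℝ := (Real.sqrt (2 * Real.pi))⁻¹ * Real.exp (-(x ^ 2) / 2)

noncomputable def stdCdf (x : ℝ) : ℝ := ∫ v in Set.Iio x, stdPdf v

noncomputable def Phi2 (μ ν ρ : ℝ) : ℝ :=
  ∫ v in Set.Iio μ, stdCdf ((ν - ρ * v) / Real.sqrt (1 - ρ ^ 2)) * stdPdf v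

noncomputable def phi2 (μ ν ρ : ℝ) : ℝ :=
  (2 * Real.pi * Real.sqrt (1 - ρ ^ 2))⁻¹ *
    Real.exp (-(μ ^ 2 - 2 * ρ * μ * ν + ν ^ 2) / (2 * (1 - ρ ^ 2)))

/-!
As `ρ → -1`, the argument `(y - ρ v) / √(1 - ρ²)` of `Φ` tends to `+∞` for `v > -y` and to `-∞`
for `v < -y`, so the integrand of `Φ₂(x, y; ρ)` converges to `φ(v) · 1[v ≥ -y]` off the null set
`{-y}`. Dominated convergence (with bound `φ`) gives the limit `∫_{[-y, x)} φ`, which is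
`max (Φ(x) - Φ(-y)) 0`, and `Φ(-y) = 1 - Φ(y)` by the symmetry of `φ`.
-/

open Topology ProbabilityTheory

lemma stdPdf_eq_gaussianPDFReal : stdPdf = gaussianPDFReal 0 1 := by
  ext v; simp [stdPdf, gaussianPDFReal]

lemma integrable_stdPdf : Integrable stdPdf :=
  stdPdf_eq_gaussianPDFReal ▸ integrable_gaussianPDFReal 0 1

lemma integral_stdPdf : ∫ v, stdPdf v = 1 :=
  stdPdf_eq_gaussianPDFReal ▸ integral_gaussianPDFReal_eq_one 0 one_ne_zero

lemma stdPdf_neg (v : ℝ) : stdPdf (-v) = stdPdf v := by simp [stdPdf]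

lemma stdPdf_nonneg (v : ℝ) : 0 ≤ stdPdf v := by unfold stdPdf; positivity

@[fun_prop]
lemma measurable_stdPdf : Measurable stdPdf := by unfold stdPdf; fun_prop

lemma stdCdf_eq_cdf_gaussianReal : stdCdf = cdf (gaussianReal 0 1) := by
  ext x
  rw [cdf_eq_real, measureReal_def, gaussianReal_apply_eq_integral 0 one_ne_zero,
    ENNReal.toReal_ofReal (setIntegral_nonneg measurableSet_Iic fun v _ =>
      gaussianPDFReal_nonneg 0 1 v), ← stdPdf_eq_gaussianPDFReal, stdCdf,
    integral_Iic_eq_integral_Iio]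

lemma stdCdf_nonneg (x : ℝ) : 0 ≤ stdCdf x := stdCdf_eq_cdf_gaussianReal ▸ cdf_nonneg _ x

lemma stdCdf_le_one (x : ℝ) : stdCdf x ≤ 1 := stdCdf_eq_cdf_gaussianReal ▸ cdf_le_one _ x

lemma monotone_stdCdf : Monotone stdCdf := stdCdf_eq_cdf_gaussianReal ▸ monotone_cdf _

@[fun_prop]
lemma measurable_stdCdf : Measurable stdCdf := monotone_stdCdf.measurable

lemma tendsto_stdCdf_atBot : Tendsto stdCdf atBot (𝓝 0) :=
  stdCdf_eq_cdf_gaussianReal ▸ tendsto_cdf_atBot _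

lemma tendsto_stdCdf_atTop : Tendsto stdCdf atTop (𝓝 1) :=
  stdCdf_eq_cdf_gaussianReal ▸ tendsto_cdf_atTop _

lemma stdCdf_neg (y : ℝ) : stdCdf (-y) = 1 - stdCdf y := by
  have hreflect : ∫ v in Ioi y, stdPdf v = stdCdf (-y) := calc
    ∫ v in Ioi y, stdPdf v = ∫ v in Ioi y, stdPdf (-v) := by simp only [stdPdf_neg]
    _ = ∫ v in Iic (-y), stdPdf v := integral_comp_neg_Ioi y stdPdf
    _ = stdCdf (-y) := integral_Iic_eq_integral_Iio
  have hsplit := intervalIntegral.integral_Iio_add_Ici (b := y) integrable_stdPdf.integrableOn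
    integrable_stdPdf.integrableOn
  rw [integral_stdPdf, integral_Ici_eq_integral_Ioi, hreflect] at hsplit
  rw [← hsplit]
  exact (add_sub_cancel_left (stdCdf y) _).symm

lemma setIntegral_Ico_stdPdf {a b : ℝ} (hab : a ≤ b) :
    ∫ v in Ico a b, stdPdf v = stdCdf b - stdCdf a :=
  (intervalIntegral.integral_Iio_sub_Iio integrable_stdPdf.integrableOn hab).symm

lemma setIntegral_Iio_indicator_Ici_stdPdf (x y : ℝ) :
    ∫ v in Iio x, (Ici (-y)).indicator stdPdf v = max (stdCdf x + stdCdf y - 1) 0 := by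
  rw [setIntegral_indicator measurableSet_Ici, inter_comm, Ici_inter_Iio]
  have hy : stdCdf y - 1 = -stdCdf (-y) := by rw [stdCdf_neg]; ring
  rcases le_total x (-y) with h | h
  · rw [Ico_eq_empty_of_le h, Measure.restrict_empty, integral_zero_measure, eq_comm, max_eq_right]
    linarith [monotone_stdCdf h]
  · rw [setIntegral_Ico_stdPdf h, add_sub_assoc, hy, max_eq_left] <;> linarith [monotone_stdCdf h]

lemma tendsto_inv_sqrt_one_sub_sq :
    Tendsto (fun ρ : ℝ => (√(1 - ρ ^ 2))⁻¹) (𝓝[Ioo (-1) 1] (-1)) atTop := by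
  refine tendsto_inv_nhdsGT_zero.comp (tendsto_nhdsWithin_iff.2 ⟨?_, ?_⟩)
  · have : Tendsto (fun ρ : ℝ => √(1 - ρ ^ 2)) (𝓝 (-1)) (𝓝 (√(1 - (-1) ^ 2))) :=
      (by fun_prop : Continuous fun ρ : ℝ => √(1 - ρ ^ 2)).tendsto (-1)
    simpa using this.mono_left nhdsWithin_le_nhds
  · filter_upwards [self_mem_nhdsWithin] with ρ hρ
    exact Real.sqrt_pos.2 (by nlinarith [hρ.1, hρ.2])

lemma tendsto_stdCdf_mul_stdPdf {y v : ℝ} (hv : v ≠ -y) :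
    Tendsto (fun ρ => stdCdf ((y - ρ * v) / √(1 - ρ ^ 2)) * stdPdf v) (𝓝[Ioo (-1) 1] (-1))
      (𝓝 ((Ici (-y)).indicator stdPdf v)) := by
  have hnum : Tendsto (fun ρ : ℝ => y - ρ * v) (𝓝[Ioo (-1) 1] (-1)) (𝓝 (y + v)) := by
    have : Tendsto (fun ρ : ℝ => y - ρ * v) (𝓝 (-1)) (𝓝 (y - -1 * v)) :=
      (by fun_prop : Continuous fun ρ : ℝ => y - ρ * v).tendsto (-1)
    simpa using this.mono_left nhdsWithin_le_nhds
  simp_rw [div_eq_mul_inv]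
  rcases hv.lt_or_gt with h | h
  · rw [indicator_of_notMem (by simpa using h)]
    simpa using (tendsto_stdCdf_atBot.comp
      (hnum.neg_mul_atTop (by linarith) tendsto_inv_sqrt_one_sub_sq)).mul_const (stdPdf v)
  · rw [indicator_of_mem (by simpa using h.le)]
    simpa using (tendsto_stdCdf_atTop.comp
      (hnum.pos_mul_atTop (by linarith) tendsto_inv_sqrt_one_sub_sq)).mul_const (stdPdf v)

theorem stmt4 (x y : ℝ) :
    Filter.Tendsto (fun ρ => Phi2 x y ρ) (nhdsWithin (-1) (Set.Ioo (-1 : ℝ) 1))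
      (nhds (max (stdCdf x + stdCdf y - 1) 0)) := by
  rw [← setIntegral_Iio_indicator_Ici_stdPdf]
  refine tendsto_integral_filter_of_dominated_convergence stdPdf
    (.of_forall fun ρ => by fun_prop) (.of_forall fun ρ => .of_forall fun v => ?_)
    integrable_stdPdf.integrableOn ?_
  · rw [Real.norm_of_nonneg (mul_nonneg (stdCdf_nonneg _) (stdPdf_nonneg v))]
    exact mul_le_of_le_one_left (stdPdf_nonneg v) (stdCdf_le_one _)
  · filter_upwards [ae_restrict_of_ae (Measure.ae_ne volume (-y))] with v hv
    exact tendsto_stdCdf_mul_stdPdf hv
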